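/- Fix w ∈ ℂⁿ and ε > 0, and let ψ(z) := log(‖z − w‖² + ε²). Then ψ is smooth on ℂⁿ and for all z, v ∈ ℂⁿ the complex Hessian satisfies ∑_{i,j=1}^{n} (∂²ψ/∂z_i∂z̄_j)(z) v_i conj(v_j) ≥ ε² ‖v‖² / (‖z − w‖² + ε²)². In particular, ψ is strictly plurisubharmonic on ℂⁿ. -/

import Mathlib

open MeasureTheory Complex Filter Topology
open scoped ENNReal NNReal

noncomputable section

abbrev Cn (n : ℕ) := EuclideanSpace ℂ (Fin n)

instance (n : ℕ) : MeasureSpace (Cn n) where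
  volume := Measure.map (WithLp.toLp 2) (volume : Measure (Fin n → ℂ))

variable {n : ℕ}

/-- Wirtinger derivative ∂f/∂z_j -/
def wderivZ {F : Type*} [NormedAddCommGroup F] [NormedSpace ℂ F]
    (f : Cn n → F) (j : Fin n) (z : Cn n) : F :=
  (2 : ℂ)⁻¹ • (fderiv ℝ f z (EuclideanSpace.single j 1)
    - Complex.I • fderiv ℝ f z (EuclideanSpace.single j Complex.I))

/-- Wirtinger derivative ∂f/∂z̄_j -/
def wderivZbar {F : Type*} [NormedAddCommGroup F] [NormedSpace ℂ F]
    (f : Cn n → F) (j : Fin n) (z : Cn n) : F :=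
  (2 : ℂ)⁻¹ • (fderiv ℝ f z (EuclideanSpace.single j 1)
    + Complex.I • fderiv ℝ f z (EuclideanSpace.single j Complex.I))

/-- complex Hessian entry ∂²ψ/∂z_i∂z̄_j -/
def cHess (ψ : Cn n → ℝ) (i j : Fin n) (z : Cn n) : ℂ :=
  wderivZ (fun w => wderivZbar (fun x => (ψ x : ℂ)) j w) i z

def hessQF (ψ : Cn n → ℝ) (z : Cn n) (v : Cn n) : ℂ :=
  ∑ i, ∑ j, cHess ψ i j z * v i * (starRingEnd ℂ) (v j)

def StrictPSH (ψ : Cn n → ℝ) (U : Set (Cn n)) : Prop :=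
  ∀ z ∈ U, ∀ v : Cn n, v ≠ 0 → 0 < (hessQF ψ z v).re

def invHess (ψ : Cn n → ℝ) (z : Cn n) : Matrix (Fin n) (Fin n) ℂ :=
  (Matrix.of fun i j => cHess ψ i j z)⁻¹

def expNeg (t : EReal) : ℝ≥0∞ :=
  if t = ⊥ then ⊤ else ENNReal.ofReal (Real.exp (-t.toReal))

def erealPosPart (t : EReal) : ℝ≥0∞ := if t = ⊤ then ⊤ else ENNReal.ofReal t.toReal

def erealCircleIntegral (g : ℝ → EReal) : EReal :=
  ((∫⁻ θ in Set.Ioc (0:ℝ) (2*Real.pi), erealPosPart (g θ) : ℝ≥0∞) : EReal)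
    - ((∫⁻ θ in Set.Ioc (0:ℝ) (2*Real.pi), erealPosPart (-(g θ)) : ℝ≥0∞) : EReal)

def SubMeanOn (U : Set (Cn n)) (φ : Cn n → EReal) : Prop :=
  ∀ w ∈ U, ∀ v : Cn n, ∀ r : ℝ, 0 < r →
    ({p : Cn n | ∃ t : ℂ, ‖t‖ ≤ r ∧ p = w + t • v} ⊆ U) →
    φ w ≤ (((2 * Real.pi)⁻¹ : ℝ) : EReal) *
      erealCircleIntegral (fun θ => φ (w + ((r : ℂ) * Complex.exp (θ * Complex.I)) • v))

def PlurisubharmonicOn (U : Set (Cn n)) (φ : Cn n → EReal) : Prop :=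
  UpperSemicontinuousOn φ U ∧ SubMeanOn U φ

def weight (m : ℕ) (φ : Cn n → EReal) (ψ : Cn n → ℝ) (z : Cn n) : ℝ≥0∞ :=
  expNeg (((m : ℝ) : EReal) * φ z + ((ψ z : ℝ) : EReal))

def alphaNormSq (ψ : Cn n → ℝ) (α : Fin n → Cn n → ℂ) (z : Cn n) : ℝ :=
  (∑ i, ∑ j, invHess ψ z i j * α i z * (starRingEnd ℂ) (α j z)).re

def TwistedHormander (Ω : Set (Cn n)) (φ : Cn n → EReal) : Prop :=
  ∀ m : ℕ, 0 < m → ∀ ψ : Cn n → ℝ, ContDiffOn ℝ (⊤ : ℕ∞) ψ Ω → StrictPSH ψ Ω →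
    ∀ α : Fin n → Cn n → ℂ,
      (∀ j, ContDiffOn ℝ (⊤ : ℕ∞) (α j) Ω) →
      (∀ j, HasCompactSupport (α j)) →
      (∀ j, tsupport (α j) ⊆ Ω) →
      (∀ i j, ∀ z ∈ Ω, wderivZbar (α i) j z = wderivZbar (α j) i z) →
      (∫⁻ z in Ω, ENNReal.ofReal (alphaNormSq ψ α z) * weight m φ ψ z ∂volume) < ⊤ →
      ∃ u : Cn n → ℂ, ContDiffOn ℝ (⊤ : ℕ∞) u Ω ∧
        (∀ j, ∀ z ∈ Ω, wderivZbar u j z = α j z) ∧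
        (∫⁻ z in Ω, (‖u z‖₊ : ℝ≥0∞) ^ 2 * weight m φ ψ z ∂volume) ≤
          ∫⁻ z in Ω, ENNReal.ofReal (alphaNormSq ψ α z) * weight m φ ψ z ∂volume

def LocallyHolderOn (φ : Cn n → EReal) (V : Set (Cn n)) : Prop :=
  ∀ K : Set (Cn n), IsOpen K → IsCompact (closure K) → closure K ⊆ V →
    ∃ a C : ℝ, a ∈ Set.Ioc (0:ℝ) 1 ∧ 0 < C ∧
      ∀ z ∈ K, ∀ w ∈ K, |(φ z).toReal - (φ w).toReal| ≤ C * ‖z - w‖ ^ a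

def MultipleL2ExtWith (U : Set (Cn n)) (φ : Cn n → EReal) (Cm : ℕ → ℝ) : Prop :=
  (∀ m, 0 < Cm m) ∧
  Tendsto (fun m : ℕ => Real.log (Cm m) / m) atTop (𝓝 0) ∧
  ∀ m : ℕ, 0 < m → ∀ p ∈ U, φ p ≠ ⊥ →
    ∃ f : Cn n → ℂ, DifferentiableOn ℂ f U ∧ f p = 1 ∧
      (∫⁻ z in U, (‖f z‖₊ : ℝ≥0∞) ^ 2 * expNeg (((m : ℝ) : EReal) * φ z) ∂volume) ≤
        ENNReal.ofReal (Cm m) * expNeg (((m : ℝ) : EReal) * φ p)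

def MultipleL2Ext (U : Set (Cn n)) (φ : Cn n → EReal) : Prop :=
  ∃ Cm : ℕ → ℝ, MultipleL2ExtWith U φ Cm


namespace LogSqAux
variable {n : ℕ} (w : Cn n) (ε : ℝ)

def S (z : Cn n) : ℝ := ‖z - w‖ ^ 2 + ε ^ 2

lemma S_pos (hε : 0 < ε) (z : Cn n) : 0 < S w ε z := by
  unfold S; positivity

lemma hasFDerivAt_S (z : Cn n) :
    HasFDerivAt (S w ε) ((2:ℕ) • (innerSL ℝ (z - w))) z := by
  have h1 : HasFDerivAt (fun x : Cn n => x - w) (ContinuousLinearMap.id ℝ (Cn n)) z :=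
    (hasFDerivAt_id z).sub_const w
  have := h1.norm_sq
  have h2 := this.add_const (ε ^ 2)
  simp only [ContinuousLinearMap.comp_id] at h2
  exact h2

lemma inner_single (z : Cn n) (j : Fin n) (c : ℂ) :
    (innerSL ℝ (z - w)) (EuclideanSpace.single j c) = (c * (starRingEnd ℂ) ((z - w) j)).re := by
  simp only [innerSL_apply_apply, PiLp.inner_apply, EuclideanSpace.single_apply, Complex.inner]
  rw [Finset.sum_eq_single j]
  · simp [mul_comm]
  · intro b _ hb; simp [hb]
  · simp

lemma hasFDerivAt_psi (hε : 0 < ε) (z : Cn n) :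
    HasFDerivAt (fun z => Real.log (S w ε z))
      ((S w ε z)⁻¹ • ((2:ℕ) • (innerSL ℝ (z - w)))) z :=
  (hasFDerivAt_S w ε z).log (S_pos w ε hε z).ne'

lemma hasFDerivAt_psiC (hε : 0 < ε) (z : Cn n) :
    HasFDerivAt (fun x => ((Real.log (S w ε x) : ℝ) : ℂ))
      (Complex.ofRealCLM.comp ((S w ε z)⁻¹ • ((2:ℕ) • (innerSL ℝ (z - w))))) z :=
  Complex.ofRealCLM.hasFDerivAt.comp z (hasFDerivAt_psi w ε hε z)

lemma wderivZbar_psi (hε : 0 < ε) (j : Fin n) (z : Cn n) :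
    wderivZbar (fun x => ((Real.log (S w ε x) : ℝ) : ℂ)) j z
      = (z - w) j / (S w ε z) := by
  have hS := (S_pos w ε hε z).ne'
  rw [wderivZbar, (hasFDerivAt_psiC w ε hε z).fderiv]
  simp only [ContinuousLinearMap.coe_comp', Function.comp_apply,
    ContinuousLinearMap.coe_smul', Pi.smul_apply, ContinuousLinearMap.smul_apply,
    inner_single w, Complex.ofRealCLM_apply]
  have h1 : ((1:ℂ) * (starRingEnd ℂ) ((z - w) j)).re = ((z - w) j).re := by simp
  have h2 : (Complex.I * (starRingEnd ℂ) ((z - w) j)).re = ((z - w) j).im := by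
    simp [Complex.mul_re]
    ring
  rw [h1, h2]
  rw [smul_eq_mul]
  have := Complex.re_add_im ((z - w) j)
  rw [← this]
  field_simp
  simp
  ring

lemma hasFDerivAt_g (hε : 0 < ε) (j : Fin n) (z : Cn n) :
    HasFDerivAt (fun z : Cn n => (z - w) j / (S w ε z))
      ((z - w) j • (Complex.ofRealCLM.comp ((-(S w ε z ^ 2)⁻¹) • ((2:ℕ) • innerSL ℝ (z - w))))
        + ((S w ε z : ℂ))⁻¹ • ((EuclideanSpace.proj j (𝕜 := ℂ)).restrictScalars ℝ)) z := by
  have hS := (S_pos w ε hε z).ne'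
  have ha : HasFDerivAt (fun x : Cn n => (x - w) j)
      ((EuclideanSpace.proj j (𝕜 := ℂ)).restrictScalars ℝ) z :=
    ((EuclideanSpace.proj j (𝕜 := ℂ)).restrictScalars ℝ).hasFDerivAt.comp z
      ((hasFDerivAt_id z).sub_const w)
  have hinv : HasFDerivAt (fun x : Cn n => ((S w ε x)⁻¹ : ℝ))
      ((-(S w ε z ^ 2)⁻¹) • ((2:ℕ) • innerSL ℝ (z - w))) z :=
    (hasDerivAt_inv hS).comp_hasFDerivAt z (hasFDerivAt_S w ε z)
  have hinvC : HasFDerivAt (fun x : Cn n => (((S w ε x)⁻¹ : ℝ) : ℂ))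
      (Complex.ofRealCLM.comp ((-(S w ε z ^ 2)⁻¹) • ((2:ℕ) • innerSL ℝ (z - w)))) z :=
    Complex.ofRealCLM.hasFDerivAt.comp z hinv
  have h := ha.mul hinvC
  have hfun : (fun z : Cn n => (z - w) j / (S w ε z : ℂ))
      = fun y => (y - w) j * (((S w ε y)⁻¹ : ℝ) : ℂ) := by
    funext y; rw [div_eq_mul_inv, Complex.ofReal_inv]
  rw [hfun, ← Complex.ofReal_inv]
  exact h

lemma cHess_eq' (hε : 0 < ε) (i j : Fin n) (z : Cn n) :
    wderivZ (fun y => wderivZbar (fun x => ((Real.log (S w ε x) : ℝ) : ℂ)) j y) i z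
    = (if i = j then ((S w ε z : ℂ))⁻¹ else 0)
      - (starRingEnd ℂ) ((z - w) i) * (z - w) j / (S w ε z) ^ 2 := by
  have hS : (S w ε z : ℝ) ≠ 0 := (S_pos w ε hε z).ne'
  have hg : (fun y => wderivZbar (fun x => ((Real.log (S w ε x) : ℝ) : ℂ)) j y)
      = fun y : Cn n => (y - w) j / (S w ε y) := funext (wderivZbar_psi w ε hε j)
  rw [wderivZ, hg, (hasFDerivAt_g w ε hε j z).fderiv]
  simp only [ContinuousLinearMap.add_apply, ContinuousLinearMap.coe_smul', Pi.smul_apply,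
    ContinuousLinearMap.coe_comp', Function.comp_apply, ContinuousLinearMap.smul_apply,
    Complex.ofRealCLM_apply, inner_single w, ContinuousLinearMap.coe_restrictScalars',
    PiLp.proj_apply, EuclideanSpace.single_apply]
  have h1 : ((1:ℂ) * (starRingEnd ℂ) ((z - w) i)).re = ((z - w) i).re := by simp
  have h2 : (Complex.I * (starRingEnd ℂ) ((z - w) i)).re = ((z - w) i).im := by
    simp [Complex.mul_re]
    ring
  rw [h1, h2]
  have hc : (starRingEnd ℂ) ((z - w) i)
      = ((((z - w) i).re : ℝ) : ℂ) - ((((z - w) i).im : ℝ) : ℂ) * Complex.I := by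
    rw [Complex.ext_iff]
    constructor <;> simp <;> ring
  rw [hc]
  by_cases hij : i = j
  · subst hij
    simp only [if_pos rfl]
    push_cast
    field_simp
    ring_nf
    simp [Complex.I_sq]
    ring_nf
    try exact fun h => absurd h.symm hij
    have hSc : (S w ε z : ℂ) ≠ 0 := by exact_mod_cast hS
    have e : (S w ε z : ℂ) * (S w ε z : ℂ)⁻¹ ^ 2 = (S w ε z : ℂ)⁻¹ := by
      rw [pow_two, ← mul_assoc, mul_inv_cancel₀ hSc, one_mul]
    rw [e]
  · rw [if_neg hij, if_neg (fun h => hij h.symm)]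
    push_cast
    field_simp
    ring_nf
    simp [Complex.I_sq]
    ring_nf
    try exact fun h => absurd h.symm hij
    have hji : ¬ j = i := fun h => hij h.symm
    simp only [hji, if_false, add_zero]

lemma cHess_eq (hε : 0 < ε) (i j : Fin n) (z : Cn n) :
    cHess (fun x : Cn n => Real.log (‖x - w‖ ^ 2 + ε ^ 2)) i j z
    = (if i = j then ((S w ε z : ℂ))⁻¹ else 0)
      - (starRingEnd ℂ) ((z - w) i) * (z - w) j / (S w ε z) ^ 2 :=
  cHess_eq' w ε hε i j z

lemma hessQF_eq (hε : 0 < ε) (z v : Cn n) :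
    hessQF (fun x : Cn n => Real.log (‖x - w‖ ^ 2 + ε ^ 2)) z v
      = ((‖v‖ ^ 2 / S w ε z
          - Complex.normSq (@inner ℂ _ _ (z - w) v) / (S w ε z) ^ 2 : ℝ) : ℂ) := by
  have hS : (S w ε z : ℝ) ≠ 0 := (S_pos w ε hε z).ne'
  simp only [hessQF, cHess_eq w ε hε]
  have expand : ∀ i j : Fin n,
      ((if i = j then ((S w ε z : ℂ))⁻¹ else 0)
        - (starRingEnd ℂ) ((z - w) i) * (z - w) j / (S w ε z) ^ 2) * v i
          * (starRingEnd ℂ) (v j)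
      = (if i = j then (v i * (starRingEnd ℂ) (v j)) / (S w ε z) else 0)
        - ((starRingEnd ℂ) ((z - w) i) * v i) * ((z - w) j * (starRingEnd ℂ) (v j))
            / (S w ε z) ^ 2 := by
    intro i j
    by_cases hij : i = j <;> simp [hij] <;> ring
  simp only [expand, Finset.sum_sub_distrib]
  have hsum1 : (∑ i : Fin n, ∑ j : Fin n,
      (if i = j then (v i * (starRingEnd ℂ) (v j)) / (S w ε z) else 0))
      = ((‖v‖ ^ 2 / S w ε z : ℝ) : ℂ) := by
    have : ∀ i : Fin n, (∑ j : Fin n,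
        (if i = j then (v i * (starRingEnd ℂ) (v j)) / (S w ε z) else 0))
        = v i * (starRingEnd ℂ) (v i) / (S w ε z) := by
      intro i
      rw [Finset.sum_ite_eq (Finset.univ : Finset (Fin n)) i]
      simp
    rw [Finset.sum_congr rfl fun i _ => this i]
    have hv : ∀ i : Fin n, v i * (starRingEnd ℂ) (v i) = ((Complex.normSq (v i) : ℝ) : ℂ) :=
      fun i => Complex.mul_conj (v i)
    simp only [div_eq_mul_inv, ← Finset.sum_mul, hv]
    rw [← Complex.ofReal_sum]
    have hnorm : (∑ i : Fin n, Complex.normSq (v i)) = ‖v‖ ^ 2 := by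
      rw [EuclideanSpace.norm_eq, Real.sq_sqrt (by positivity)]
      exact Finset.sum_congr rfl fun i _ => (Complex.normSq_eq_norm_sq (v i)).trans (by rfl)
    rw [hnorm]
    push_cast
    ring
  have hsum2 : (∑ i : Fin n, ∑ j : Fin n,
      ((starRingEnd ℂ) ((z - w) i) * v i) * ((z - w) j * (starRingEnd ℂ) (v j))
        / (S w ε z) ^ 2)
      = ((Complex.normSq (@inner ℂ _ _ (z - w) v) / (S w ε z) ^ 2 : ℝ) : ℂ) := by
    have hinner : (@inner ℂ _ _ (z - w) v : ℂ)
        = ∑ i : Fin n, (starRingEnd ℂ) ((z - w) i) * v i := by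
      rw [PiLp.inner_apply]; exact Finset.sum_congr rfl fun i _ => RCLike.inner_apply' _ _
    have hconj : (starRingEnd ℂ) (@inner ℂ _ _ (z - w) v)
        = ∑ j : Fin n, (z - w) j * (starRingEnd ℂ) (v j) := by
      rw [hinner, map_sum]
      exact Finset.sum_congr rfl fun j _ => by rw [map_mul, Complex.conj_conj]
    simp only [← Finset.sum_div, ← Finset.sum_mul_sum]
    rw [← hinner, ← hconj, Complex.mul_conj]
    push_cast
    ring
  rw [hsum1, hsum2]
  push_cast
  ring

end LogSqAux

/-- For `ψ(z) = log(‖z − w‖² + ε²)`, `ψ` is smooth, its complex Hessian is bounded below by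
`ε²‖v‖²/(‖z − w‖² + ε²)²`, and `ψ` is strictly plurisubharmonic on `ℂⁿ`. -/
theorem log_sq_dist_strictly_psh {n : ℕ} (w : Cn n) (ε : ℝ) (hε : 0 < ε) :
    ContDiff ℝ (⊤ : ℕ∞) (fun z : Cn n => Real.log (‖z - w‖ ^ 2 + ε ^ 2)) ∧
    (∀ z v : Cn n,
      ε ^ 2 * ‖v‖ ^ 2 / (‖z - w‖ ^ 2 + ε ^ 2) ^ 2 ≤
        (hessQF (fun x : Cn n => Real.log (‖x - w‖ ^ 2 + ε ^ 2)) z v).re) ∧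
    StrictPSH (fun z : Cn n => Real.log (‖z - w‖ ^ 2 + ε ^ 2)) Set.univ := by
  have hC : ContDiff ℝ (⊤ : ℕ∞) (fun z : Cn n => Real.log (‖z - w‖ ^ 2 + ε ^ 2)) := by
    apply ContDiff.log
    · exact ((contDiff_id.sub contDiff_const).norm_sq ℂ).add contDiff_const
    · intro z
      have := LogSqAux.S_pos w ε hε z
      exact this.ne'
  have hIneq : ∀ z v : Cn n,
      ε ^ 2 * ‖v‖ ^ 2 / (‖z - w‖ ^ 2 + ε ^ 2) ^ 2 ≤
        (hessQF (fun x : Cn n => Real.log (‖x - w‖ ^ 2 + ε ^ 2)) z v).re := by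
    intro z v
    rw [LogSqAux.hessQF_eq w ε hε z v, Complex.ofReal_re]
    have hSpos : (0:ℝ) < ‖z - w‖ ^ 2 + ε ^ 2 := LogSqAux.S_pos w ε hε z
    have hcs : Complex.normSq (@inner ℂ _ _ (z - w) v) ≤ ‖z - w‖ ^ 2 * ‖v‖ ^ 2 := by
      have h := norm_inner_le_norm (𝕜 := ℂ) (z - w) v
      have h2 : Complex.normSq (@inner ℂ _ _ (z - w) v)
          = ‖(@inner ℂ _ _ (z - w) v : ℂ)‖ ^ 2 :=
        (Complex.normSq_eq_norm_sq _).trans (by rfl)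
      rw [h2]
      nlinarith [norm_nonneg (@inner ℂ _ _ (z - w) v : ℂ), norm_nonneg (z - w), norm_nonneg v]
    have key : ‖v‖ ^ 2 / LogSqAux.S w ε z
          - Complex.normSq (@inner ℂ _ _ (z - w) v) / (LogSqAux.S w ε z) ^ 2
          - ε ^ 2 * ‖v‖ ^ 2 / (‖z - w‖ ^ 2 + ε ^ 2) ^ 2
        = (‖v‖ ^ 2 * ‖z - w‖ ^ 2 - Complex.normSq (@inner ℂ _ _ (z - w) v))
            / (‖z - w‖ ^ 2 + ε ^ 2) ^ 2 := by
      show ‖v‖ ^ 2 / (‖z - w‖ ^ 2 + ε ^ 2) - _ / (‖z - w‖ ^ 2 + ε ^ 2) ^ 2 - _ = _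
      field_simp
      ring
    have hnonneg : (0:ℝ) ≤ (‖v‖ ^ 2 * ‖z - w‖ ^ 2
        - Complex.normSq (@inner ℂ _ _ (z - w) v)) / (‖z - w‖ ^ 2 + ε ^ 2) ^ 2 := by
      apply div_nonneg _ (by positivity)
      linarith
    linarith [key, hnonneg]
  refine ⟨hC, hIneq, ?_⟩
  intro z _ v hv
  have h1 := hIneq z v
  have hSpos : (0:ℝ) < ‖z - w‖ ^ 2 + ε ^ 2 := LogSqAux.S_pos w ε hε z
  have hvpos : (0:ℝ) < ‖v‖ := norm_pos_iff.mpr hv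
  have h2 : (0:ℝ) < ε ^ 2 * ‖v‖ ^ 2 / (‖z - w‖ ^ 2 + ε ^ 2) ^ 2 := by positivity
  linarith
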